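/- arXiv:1503.03184 — 5 statements merged into one kernel-verified Lean document; each statement's English description precedes it below -/
import Mathlib

section
/- Let m, n ≥ 2 and let u ∈ ℝ^{m-1}, v ∈ ℝ^{n-1}. Define the matrix Q ∈ ℝ^{m×n} as the product of the m×2 matrix whose first column is (u; 0) and second column is (0; -u), with the 2×n matrix whose first row is (0, vᵀ) and second row is (vᵀ, 0). Then S(Q) = 0, i.e., Q lies in the rank-two null space of the lifted linear convolution operator S. -/
open Finset

noncomputable section

/-- Extend a `Fin d`-indexed vector to `ℕ` by zero. -/
def ext0 {d : ℕ} (u : Fin d → ℝ) : ℕ → ℝ := fun j => if h : j < d then u ⟨j, h⟩ else 0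

/-- Shifted (delayed by one) extension: value at `j` is `u (j-1)`, zero at `j = 0`. -/
def extm {d : ℕ} (u : Fin d → ℝ) : ℕ → ℝ := fun j => if j = 0 then 0 else ext0 u (j - 1)

/-- Linear convolution of `x ∈ ℝ^m` and `y ∈ ℝ^n`, a vector in `ℝ^{m+n-1}` (0-indexed). -/
def conv {m n : ℕ} (x : Fin m → ℝ) (y : Fin n → ℝ) : Fin (m + n - 1) → ℝ :=
  fun l => ∑ j : Fin m, ∑ k : Fin n, if (j : ℕ) + (k : ℕ) = (l : ℕ) then x j * y k else 0

/-- The lifted linear convolution operator, given explicitly. -/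
def liftS {m n : ℕ} (W : Matrix (Fin m) (Fin n) ℝ) : Fin (m + n - 1) → ℝ :=
  fun l => ∑ j : Fin m, ∑ k : Fin n, if (j : ℕ) + (k : ℕ) = (l : ℕ) then W j k else 0

/-
Since `(ext0 u, extm u)` are the coefficient sequences of `u(X)` and `X u(X)`, the entries of
`Q` on the antidiagonal `j + k = l` add up to the `X^l`-coefficient of
`u(X) · X v(X) - X u(X) · v(X) = 0`: both products are the convolution `u ⋆ v` delayed by one.
-/

theorem ext0_eq_zero_of_le {d j : ℕ} (u : Fin d → ℝ) (h : d ≤ j) : ext0 u j = 0 :=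
  dif_neg (not_lt.mpr h)

theorem extm_eq_zero_of_le {d j : ℕ} (u : Fin d → ℝ) (h : d ≤ j - 1) : extm u j = 0 := by
  unfold extm
  split_ifs
  · rfl
  · exact ext0_eq_zero_of_le u h

theorem sum_fin_sum_fin_ite_add_eq_sum_antidiagonal {M : Type*} [AddCommMonoid M] {m n : ℕ}
    (f : ℕ → ℕ → M) (hm : ∀ j k, m ≤ j → f j k = 0) (hn : ∀ j k, n ≤ k → f j k = 0) (l : ℕ) :
    ∑ j : Fin m, ∑ k : Fin n, (if (j : ℕ) + (k : ℕ) = l then f j k else 0) =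
      ∑ p ∈ antidiagonal l, f p.1 p.2 := by
  calc ∑ j : Fin m, ∑ k : Fin n, (if (j : ℕ) + (k : ℕ) = l then f j k else 0)
      = ∑ j ∈ range m, ∑ k ∈ range n, (if j + k = l then f j k else 0) := by
        rw [← Fin.sum_univ_eq_sum_range (fun j => ∑ k ∈ range n, if j + k = l then f j k else 0)]
        exact sum_congr rfl fun j _ =>
          Fin.sum_univ_eq_sum_range (fun k => if (j : ℕ) + k = l then f j k else 0) n
    _ = ∑ p ∈ (range m ×ˢ range n).filter (fun p => p.1 + p.2 = l), f p.1 p.2 := by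
        rw [sum_filter, sum_product]
    _ = ∑ p ∈ antidiagonal l, f p.1 p.2 := by
        refine sum_subset (fun p hp => by simpa using (mem_filter.mp hp).2) fun p hl hp => ?_
        simp only [mem_filter, mem_product, mem_range, HasAntidiagonal.mem_antidiagonal] at hl hp
        by_cases hj : p.1 < m
        · exact hn _ _ (not_lt.mp fun hk => hp ⟨⟨hj, hk⟩, hl⟩)
        · exact hm _ _ (not_lt.mp hj)

theorem sum_antidiagonal_mul_shift {R : Type*} [Semiring R] (a b : ℕ → R) (l : ℕ) :
    ∑ p ∈ antidiagonal l, a p.1 * (if p.2 = 0 then 0 else b (p.2 - 1)) =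
      ∑ p ∈ antidiagonal l, (if p.1 = 0 then 0 else a (p.1 - 1)) * b p.2 := by
  cases l with
  | zero => simp
  | succ l =>
    rw [Nat.sum_antidiagonal_succ', Nat.sum_antidiagonal_succ]
    simp

theorem rank_two_nullspace_general (m n : ℕ) (u : Fin (m - 1) → ℝ) (v : Fin (n - 1) → ℝ)
    (Q : Matrix (Fin m) (Fin n) ℝ)
    (hQ : ∀ (i : Fin m) (l : Fin n),
      Q i l = ext0 u i * extm v l - extm u i * ext0 v l) :
    liftS Q = 0 := by
  funext l
  have hvanish_row : ∀ j k : ℕ, m ≤ j →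
      ext0 u j * extm v k - extm u j * ext0 v k = 0 := fun j k hj => by
    simp [ext0_eq_zero_of_le u (by omega : m - 1 ≤ j),
      extm_eq_zero_of_le u (by omega : m - 1 ≤ j - 1)]
  have hvanish_col : ∀ j k : ℕ, n ≤ k →
      ext0 u j * extm v k - extm u j * ext0 v k = 0 := fun j k hk => by
    simp [ext0_eq_zero_of_le v (by omega : n - 1 ≤ k),
      extm_eq_zero_of_le v (by omega : n - 1 ≤ k - 1)]
  calc liftS Q l
      = ∑ p ∈ antidiagonal (l : ℕ), (ext0 u p.1 * extm v p.2 - extm u p.1 * ext0 v p.2) := by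
        simp only [liftS, hQ]
        exact sum_fin_sum_fin_ite_add_eq_sum_antidiagonal _ hvanish_row hvanish_col l
    _ = 0 := by
        rw [sum_sub_distrib, sub_eq_zero]
        exact sum_antidiagonal_mul_shift (ext0 u) (ext0 v) l

/-- the matrix `Q = [u,0;0,-u]·[0,vᵀ;vᵀ,0]` lies in the rank-two
null space of the lifted linear convolution operator. -/
theorem rank_two_nullspace (m n : ℕ) (hm : 2 ≤ m) (hn : 2 ≤ n)
    (u : Fin (m - 1) → ℝ) (v : Fin (n - 1) → ℝ)
    (Q : Matrix (Fin m) (Fin n) ℝ)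
    (hQ : ∀ (i : Fin m) (l : Fin n),
      Q i l = ext0 u i * extm v l - extm u i * ext0 v l) :
    liftS Q = 0 :=
  rank_two_nullspace_general m n u v Q hQ
end
end

section
/- Let m, n ≥ 2, u ∈ ℝ^{m-1}, v ∈ ℝ^{n-1}, and θ, φ ∈ ℝ. Define x ∈ ℝ^m by x(j) = u(j) cos θ - u(j-1) sin θ (with the convention u(0)=u(m)=0), x' analogously with φ in place of θ, y ∈ ℝ^n by y(l) = v(l-1) sin φ - v(l) cos φ (with the convention v(0)=v(n)=0), and y' analogously with θ in place of φ. Then x yᵀ - x' (y')ᵀ = sin(φ - θ) · M, where M is the rank-≤2 matrix given by the factorization [u,0;0,-u]·[0,vᵀ;vᵀ,0]; consequently x ⋆ y = x' ⋆ y'. -/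
open Finset

noncomputable section

lemma ext0_last {d : ℕ} (u : Fin d → ℝ) {j : ℕ} (h : d ≤ j) : ext0 u j = 0 := by
  simp [ext0, Nat.not_lt.mpr h]

lemma shift_sum (n l j : ℕ) (hn : 1 ≤ n) (g : ℕ → ℝ) (hg : g (n - 1) = 0) (c : ℝ) :
    (∑ k ∈ range n, if j + k = l then c * (if k = 0 then 0 else g (k - 1)) else 0)
      = ∑ k ∈ range n, if j + k + 1 = l then c * g k else 0 := by
  obtain ⟨N, rfl⟩ : ∃ N, n = N + 1 := ⟨n - 1, (Nat.succ_pred_eq_of_pos hn).symm⟩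
  have hgN : g N = 0 := by simpa using hg
  rw [Finset.sum_range_succ', Finset.sum_range_succ, hgN]
  simp only [Nat.add_eq_zero, one_ne_zero, and_false, if_false, Nat.add_sub_cancel,
    mul_zero, ite_self, add_zero, ← Nat.add_assoc]
  simp

lemma fin_double_sum (m n : ℕ) (f : ℕ → ℕ → ℝ) :
    (∑ j : Fin m, ∑ k : Fin n, f j k) = ∑ j ∈ range m, ∑ k ∈ range n, f j k := by
  rw [Fin.sum_univ_eq_sum_range (fun j => ∑ k : Fin n, f j k) m]
  exact Finset.sum_congr rfl fun j _ => Fin.sum_univ_eq_sum_range _ _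

/-- the adversarial pair construction: `x yᵀ - x' y'ᵀ = sin(φ-θ)·M`
with `M = [u,0;0,-u]·[0,vᵀ;vᵀ,0]`, and consequently `x ⋆ y = x' ⋆ y'`. -/
theorem adversarial_decomposition (m n : ℕ) (hm : 2 ≤ m) (hn : 2 ≤ n)
    (u : Fin (m - 1) → ℝ) (v : Fin (n - 1) → ℝ) (θ φ : ℝ)
    (x x' : Fin m → ℝ) (y y' : Fin n → ℝ)
    (hx : ∀ i : Fin m, x i = ext0 u i * Real.cos θ - extm u i * Real.sin θ)
    (hx' : ∀ i : Fin m, x' i = ext0 u i * Real.cos φ - extm u i * Real.sin φ)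
    (hy : ∀ l : Fin n, y l = extm v l * Real.sin φ - ext0 v l * Real.cos φ)
    (hy' : ∀ l : Fin n, y' l = extm v l * Real.sin θ - ext0 v l * Real.cos θ)
    (M : Matrix (Fin m) (Fin n) ℝ)
    (hM : ∀ (i : Fin m) (l : Fin n),
      M i l = ext0 u i * extm v l - extm u i * ext0 v l) :
    (∀ (i : Fin m) (l : Fin n), x i * y l - x' i * y' l = Real.sin (φ - θ) * M i l) ∧
    conv x y = conv x' y' := by
  have hpt : ∀ (i : Fin m) (l : Fin n),
      x i * y l - x' i * y' l = Real.sin (φ - θ) * M i l := by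
    intro i l
    rw [hx i, hy l, hx' i, hy' l, hM, Real.sin_sub]
    ring
  refine ⟨hpt, ?_⟩
  have hu : ext0 u (m - 1) = 0 := ext0_last u le_rfl
  have hv : ext0 v (n - 1) = 0 := ext0_last v le_rfl
  funext l
  have key : conv x y l - conv x' y' l = 0 := by
    unfold conv
    calc (∑ j : Fin m, ∑ k : Fin n, if (j : ℕ) + (k : ℕ) = (l : ℕ) then x j * y k else 0)
          - (∑ j : Fin m, ∑ k : Fin n, if (j : ℕ) + (k : ℕ) = (l : ℕ) then x' j * y' k else 0)
        = ∑ j : Fin m, ∑ k : Fin n,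
            if (j : ℕ) + (k : ℕ) = (l : ℕ) then
              Real.sin (φ - θ) * (ext0 u (j : ℕ) * extm v (k : ℕ)
                - extm u (j : ℕ) * ext0 v (k : ℕ)) else 0 := by
          rw [← Finset.sum_sub_distrib]
          refine Finset.sum_congr rfl fun j _ => ?_
          rw [← Finset.sum_sub_distrib]
          refine Finset.sum_congr rfl fun k _ => ?_
          by_cases h : (j : ℕ) + (k : ℕ) = (l : ℕ)
          · rw [if_pos h, if_pos h, if_pos h, ← hM, hpt j k]
          · rw [if_neg h, if_neg h, if_neg h, sub_zero]
      _ = Real.sin (φ - θ) * ((∑ j ∈ range m, ∑ k ∈ range n,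
              if j + k = (l : ℕ) then ext0 u j * extm v k else 0)
            - (∑ j ∈ range m, ∑ k ∈ range n,
              if j + k = (l : ℕ) then extm u j * ext0 v k else 0)) := by
          rw [fin_double_sum m n (fun j k => if j + k = (l : ℕ) then
            Real.sin (φ - θ) * (ext0 u j * extm v k - extm u j * ext0 v k) else 0)]
          rw [mul_sub, Finset.mul_sum, Finset.mul_sum, ← Finset.sum_sub_distrib]
          refine Finset.sum_congr rfl fun j _ => ?_
          rw [Finset.mul_sum, Finset.mul_sum, ← Finset.sum_sub_distrib]
          refine Finset.sum_congr rfl fun k _ => ?_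
          split <;> ring
      _ = 0 := by
          rw [mul_eq_zero]; right; rw [sub_eq_zero]
          have hA : (∑ j ∈ range m, ∑ k ∈ range n,
              if j + k = (l : ℕ) then ext0 u j * extm v k else 0)
            = ∑ j ∈ range m, ∑ k ∈ range n,
              if j + k + 1 = (l : ℕ) then ext0 u j * ext0 v k else 0 := by
            refine Finset.sum_congr rfl fun j _ => ?_
            rw [← shift_sum n l j (by omega) (ext0 v) hv (ext0 u j)]
            exact Finset.sum_congr rfl fun k _ => by rw [extm]
          have hB : (∑ j ∈ range m, ∑ k ∈ range n,
              if j + k = (l : ℕ) then extm u j * ext0 v k else 0)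
            = ∑ k ∈ range n, ∑ j ∈ range m,
              if k + j + 1 = (l : ℕ) then ext0 v k * ext0 u j else 0 := by
            rw [Finset.sum_comm]
            refine Finset.sum_congr rfl fun k _ => ?_
            rw [← shift_sum m l k (by omega) (ext0 u) hu (ext0 v k)]
            refine Finset.sum_congr rfl fun j _ => ?_
            rw [extm]
            by_cases h : (j : ℕ) + k = (l : ℕ)
            · rw [if_pos h, if_pos (by omega : k + j = (l : ℕ)), mul_comm]
            · rw [if_neg h, if_neg (by omega : ¬ k + j = (l : ℕ))]
          rw [hA, hB, Finset.sum_comm]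
          refine Finset.sum_congr rfl fun k _ => Finset.sum_congr rfl fun j _ => ?_
          by_cases h : j + k + 1 = (l : ℕ)
          · rw [if_pos h, if_pos (by omega : k + j + 1 = (l : ℕ)), mul_comm]
          · rw [if_neg h, if_neg (by omega : ¬ k + j + 1 = (l : ℕ))]
  linarith [key]
end
end

section
/- Let d ≥ 2 and let w ∈ ℝ^d satisfy w(1) ≠ 0 and w(d) ≠ 0. Then the set of pairs (w*, γ) ∈ ℝ^{d-1} × [0, π) such that w(1) = w*(1) cos γ, w(j) = w*(j) cos γ - w*(j-1) sin γ for 2 ≤ j ≤ d-1, and w(d) = -w*(d-1) sin γ, is finite with cardinality at most 2d - 2. -/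
open Finset

noncomputable section

/-- The quotient set `Q∼(w,d)` of decompositions `w = [w*,0;0,-w*][cos γ; sin γ]`
with `γ ∈ [0,π)`, written entrywise. -/
def QuotSet (d : ℕ) (w : Fin d → ℝ) : Set ((Fin (d - 1) → ℝ) × ℝ) :=
  {p | p.2 ∈ Set.Ico 0 Real.pi ∧
    ∀ j < d, ext0 w j = ext0 p.1 j * Real.cos p.2 - extm p.1 j * Real.sin p.2}

/-!
The defining equations of the quotient set say that the polynomial `W = ∑ w(j) X^j` factors
as `W* · (cos γ - sin γ X)`, where `W*` is the polynomial of `w*`. Since `w(d) ≠ 0`, `sin γ ≠ 0`,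
so `cot γ` is a root of the nonzero polynomial `W` of degree `d - 1`. Conversely `cot γ` determines
`γ ∈ (0, π)`, and `γ` determines `W* = W / (cos γ - sin γ X)`. So `(w*, γ) ↦ cot γ` embeds the
quotient set into the roots of `W`, which number at most `d - 1 ≤ 2d - 2`.
-/

open Polynomial

lemma coeff_ofFn_eq_ext0 {n : ℕ} (u : Fin n → ℝ) (k : ℕ) : (ofFn n u).coeff k = ext0 u k := by
  unfold ext0
  split_ifs with hk
  · exact ofFn_coeff_eq_val_of_lt u hk
  · exact ofFn_coeff_eq_zero_of_ge u (not_lt.mp hk)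

lemma lt_of_ext0_ne_zero {n : ℕ} {u : Fin n → ℝ} {k : ℕ} (h : ext0 u k ≠ 0) : k < n := by
  by_contra hk
  exact h (dif_neg hk)

lemma coeff_ofFn_mul_linear {n : ℕ} (u : Fin n → ℝ) (a b : ℝ) (k : ℕ) :
    (ofFn n u * (C a - C b * X)).coeff k = ext0 u k * a - extm u k * b := by
  rw [mul_sub, coeff_sub, coeff_mul_C, mul_comm (C b), ← mul_assoc, coeff_mul_C,
    coeff_ofFn_eq_ext0]
  cases k with
  | zero => simp [extm]
  | succ k => simp [extm, coeff_mul_X, coeff_ofFn_eq_ext0]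

lemma linear_ne_zero {a b : ℝ} (hb : b ≠ 0) : C a - C b * X ≠ 0 := fun h =>
  hb (by simpa [coeff_C] using congrArg (coeff · 1) h)

section QuotSet

variable {d : ℕ} {w : Fin d → ℝ} {p : (Fin (d - 1) → ℝ) × ℝ}

lemma ofFn_eq_mul_of_mem_quotSet (hp : p ∈ QuotSet d w) :
    ofFn d w = ofFn (d - 1) p.1 * (C (Real.cos p.2) - C (Real.sin p.2) * X) := by
  ext k
  rw [coeff_ofFn_mul_linear, coeff_ofFn_eq_ext0]
  by_cases hk : k < d
  · exact hp.2 k hk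
  · have hk' : ¬ k < d - 1 := by omega
    have hk'' : ¬ k - 1 < d - 1 := by omega
    simp [ext0, extm, hk, hk', hk'']

lemma sin_ne_zero_of_mem_quotSet (hwd : ext0 w (d - 1) ≠ 0) (hp : p ∈ QuotSet d w) :
    Real.sin p.2 ≠ 0 := by
  intro hs
  have hlast : ext0 p.1 (d - 1) = 0 := dif_neg (lt_irrefl _)
  apply hwd
  rw [hp.2 (d - 1) (lt_of_ext0_ne_zero hwd), hlast, hs]
  ring

lemma isRoot_cos_div_sin_of_mem_quotSet (hwd : ext0 w (d - 1) ≠ 0) (hp : p ∈ QuotSet d w) :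
    (ofFn d w).IsRoot (Real.cos p.2 / Real.sin p.2) := by
  have hs := sin_ne_zero_of_mem_quotSet hwd hp
  rw [ofFn_eq_mul_of_mem_quotSet hp]
  apply root_mul_left_of_isRoot
  simp only [IsRoot, eval_sub, eval_mul, eval_C, eval_X]
  field_simp
  ring

lemma eq_of_cos_mul_sin_eq {γ δ : ℝ} (hγ : γ ∈ Set.Ico 0 Real.pi) (hδ : δ ∈ Set.Ico 0 Real.pi)
    (h : Real.cos γ * Real.sin δ = Real.cos δ * Real.sin γ) : γ = δ := by
  have hsin : Real.sin (δ - γ) = 0 := by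
    rw [Real.sin_sub]
    linarith
  have hdiff : δ - γ = 0 := (Real.sin_eq_zero_iff_of_lt_of_lt
    (by linarith [hγ.2, hδ.1]) (by linarith [hγ.1, hδ.2])).mp hsin
  linarith

lemma injOn_cos_div_sin_quotSet (hwd : ext0 w (d - 1) ≠ 0) :
    Set.InjOn (fun p : (Fin (d - 1) → ℝ) × ℝ => Real.cos p.2 / Real.sin p.2) (QuotSet d w) := by
  intro p hp q hq hpq
  have hsp := sin_ne_zero_of_mem_quotSet hwd hp
  have hsq := sin_ne_zero_of_mem_quotSet hwd hq
  have hangle : p.2 = q.2 :=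
    eq_of_cos_mul_sin_eq hp.1 hq.1 ((div_eq_div_iff hsp hsq).mp hpq)
  have hpoly : ofFn (d - 1) p.1 = ofFn (d - 1) q.1 := by
    have h := (ofFn_eq_mul_of_mem_quotSet hp).symm.trans (ofFn_eq_mul_of_mem_quotSet hq)
    rw [hangle] at h
    exact mul_right_cancel₀ (linear_ne_zero hsq) h
  exact Prod.ext (injective_ofFn _ hpoly) hangle

end QuotSet

theorem quotSet_finite_general (d : ℕ) (w : Fin d → ℝ) (hwd : ext0 w (d - 1) ≠ 0) :
    (QuotSet d w).Finite ∧ (QuotSet d w).ncard ≤ 2 * d - 2 := by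
  have hW : ofFn d w ≠ 0 := fun h => hwd (by rw [← coeff_ofFn_eq_ext0, h, coeff_zero])
  have hmaps : Set.MapsTo (fun p : (Fin (d - 1) → ℝ) × ℝ => Real.cos p.2 / Real.sin p.2)
      (QuotSet d w) (ofFn d w).roots.toFinset := fun p hp => by
    simpa [Multiset.mem_toFinset, mem_roots hW] using isRoot_cos_div_sin_of_mem_quotSet hwd hp
  have hinj := injOn_cos_div_sin_quotSet hwd
  have hdeg : (ofFn d w).natDegree < d :=
    ofFn_natDegree_lt (Nat.one_le_of_lt (lt_of_ext0_ne_zero hwd)) w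
  refine ⟨Set.Finite.of_injOn hmaps hinj (Finset.finite_toSet _), ?_⟩
  calc (QuotSet d w).ncard ≤ (ofFn d w).roots.toFinset.card := by
        simpa using Set.ncard_le_ncard_of_injOn _ hmaps hinj (Finset.finite_toSet _)
    _ ≤ (ofFn d w).natDegree := (Multiset.toFinset_card_le _).trans (card_roots' _)
    _ ≤ 2 * d - 2 := by omega

/-- the quotient set is finite with cardinality at most `2d - 2`. -/
theorem quotSet_finite (d : ℕ) (hd : 2 ≤ d) (w : Fin d → ℝ)
    (hw0 : ext0 w 0 ≠ 0) (hwd : ext0 w (d - 1) ≠ 0) :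
    (QuotSet d w).Finite ∧ (QuotSet d w).ncard ≤ 2 * d - 2 :=
  quotSet_finite_general d w hwd
end
end

section
/- Let d ≥ 2 be an even integer and let w ∈ ℝ^d satisfy w(1) ≠ 0 and w(d) ≠ 0. Then there exist w* ∈ ℝ^{d-1} and γ ∈ [0, π) such that w(1) = w*(1) cos γ, w(j) = w*(j) cos γ - w*(j-1) sin γ for 2 ≤ j ≤ d-1, and w(d) = -w*(d-1) sin γ. -/
open Finset

noncomputable section

open Polynomial Filter in
lemma exists_root_of_odd_natDegree (p : ℝ[X]) (hodd : Odd p.natDegree) :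
    ∃ r : ℝ, p.IsRoot r := by
  have hne : p ≠ 0 := by
    intro h; rw [h] at hodd; simp at hodd
  have key : ∀ q : ℝ[X], Odd q.natDegree → 0 < q.leadingCoeff → ∃ r : ℝ, q.IsRoot r := by
    intro q hq hlc
    have hdeg : 0 < q.degree := Polynomial.natDegree_pos_iff_degree_pos.mp hq.pos
    have h1 : Tendsto (fun x => eval x q) atTop atTop :=
      q.tendsto_atTop_of_leadingCoeff_nonneg hdeg hlc.le
    obtain ⟨a, ha⟩ := (h1.eventually_ge_atTop 0).exists
    set q' : ℝ[X] := q.comp (-X) with hq'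
    have hdegX : (-X : ℝ[X]).natDegree = 1 := by simp
    have hndq' : q'.natDegree = q.natDegree := by
      rw [hq', Polynomial.natDegree_comp, hdegX, mul_one]
    have hlcq' : q'.leadingCoeff = -q.leadingCoeff := by
      rw [hq', Polynomial.leadingCoeff_comp (by rw [hdegX]; norm_num)]
      have : (-X : ℝ[X]).leadingCoeff = -1 := by simp
      rw [this, hq.neg_one_pow, mul_neg_one]
    have hdeg' : 0 < q'.degree := by
      rw [← Polynomial.natDegree_pos_iff_degree_pos, hndq']; exact hq.pos
    have h2 : Tendsto (fun x => eval x q') atTop atBot :=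
      q'.tendsto_atBot_of_leadingCoeff_nonpos hdeg' (by rw [hlcq']; linarith)
    obtain ⟨b, hb⟩ := (h2.eventually_le_atBot 0).exists
    have hb' : eval (-b) q ≤ 0 := by
      rwa [hq', Polynomial.eval_comp, Polynomial.eval_neg, Polynomial.eval_X] at hb
    obtain ⟨r, hr⟩ := intermediate_value_univ (-b) a q.continuous ⟨hb', ha⟩
    exact ⟨r, hr⟩
  rcases lt_trichotomy p.leadingCoeff 0 with h | h | h
  · obtain ⟨r, hr⟩ := key (-p) (by simpa using hodd) (by simpa using h)
    exact ⟨r, by simpa using hr⟩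
  · exact absurd (Polynomial.leadingCoeff_eq_zero.mp h) hne
  · exact key p hodd h

/-- for even `d`, every non-pathological vector admits a decomposition
`w = [w*,0;0,-w*][cos γ; sin γ]` with `γ ∈ [0,π)`. -/
theorem quotSet_nonempty_of_even (d : ℕ) (hd : 2 ≤ d) (hdeven : Even d)
    (w : Fin d → ℝ) (hw0 : ext0 w 0 ≠ 0) (hwd : ext0 w (d - 1) ≠ 0) :
    ∃ (ws : Fin (d - 1) → ℝ) (γ : ℝ), γ ∈ Set.Ico 0 Real.pi ∧
      ∀ j < d, ext0 w j = ext0 ws j * Real.cos γ - extm ws j * Real.sin γ := by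
  classical
  set p : Polynomial ℝ := ∑ j ∈ Finset.range d, Polynomial.C (ext0 w j) * Polynomial.X ^ j
    with hp_def
  have hcoeff : ∀ n, p.coeff n = ext0 w n := by
    intro n
    rw [hp_def, Polynomial.finset_sum_coeff]
    simp only [Polynomial.coeff_C_mul, Polynomial.coeff_X_pow, mul_ite, mul_one, mul_zero]
    rw [Finset.sum_ite_eq (Finset.range d) n (fun j => ext0 w j)]
    by_cases h : n < d
    · simp [h]
    · simp only [Finset.mem_range, h, if_false]
      rw [ext0, dif_neg h]
  have hd1 : d - 1 < d := by omega
  have hcoeff_top : p.coeff (d - 1) ≠ 0 := by rw [hcoeff]; exact hwd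
  have hndeg : p.natDegree = d - 1 := by
    apply le_antisymm
    · rw [Polynomial.natDegree_le_iff_coeff_eq_zero]
      intro N hN
      rw [hcoeff, ext0, dif_neg (by omega)]
    · exact Polynomial.le_natDegree_of_ne_zero hcoeff_top
  have hodd : Odd p.natDegree := by
    rw [hndeg]
    exact Nat.Even.sub_odd (by omega) hdeven odd_one
  obtain ⟨r, hr⟩ := exists_root_of_odd_natDegree p hodd
  set q : Polynomial ℝ := p /ₘ (Polynomial.X - Polynomial.C r) with hq_def
  have hfac : (Polynomial.X - Polynomial.C r) * q = p :=
    (Polynomial.mul_divByMonic_eq_iff_isRoot).mpr hr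
  have hfac' : q * (Polynomial.X - Polynomial.C r) = p := by rw [mul_comm]; exact hfac
  have hqc : ∀ n, p.coeff n = (if n = 0 then 0 else q.coeff (n - 1)) - r * q.coeff n := by
    intro n
    cases n with
    | zero =>
      rw [← hfac', Polynomial.mul_coeff_zero]
      simp [mul_comm]
    | succ m =>
      rw [← hfac', Polynomial.coeff_mul_X_sub_C]
      simp [Nat.succ_ne_zero, mul_comm]
  have hndq : q.natDegree = d - 2 := by
    rw [hq_def, Polynomial.natDegree_divByMonic p (Polynomial.monic_X_sub_C r), hndeg,
      Polynomial.natDegree_X_sub_C]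
    omega
  have hqzero : ∀ n, d - 1 ≤ n → q.coeff n = 0 := fun n hn =>
    Polynomial.coeff_eq_zero_of_natDegree_lt (by omega)
  -- the angle
  set γ : ℝ := Real.pi / 2 - Real.arctan r with hγ_def
  have hsin : Real.sin γ = Real.cos (Real.arctan r) := by
    rw [hγ_def, Real.sin_pi_div_two_sub]
  have hcos : Real.cos γ = Real.sin (Real.arctan r) := by
    rw [hγ_def, Real.cos_pi_div_two_sub]
  have hsinpos : 0 < Real.sin γ := by rw [hsin]; exact Real.cos_arctan_pos r
  have hcr : Real.cos γ = r * Real.sin γ := by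
    rw [hcos, hsin, Real.sin_arctan, Real.cos_arctan]; ring
  have hγmem : γ ∈ Set.Ico 0 Real.pi := by
    constructor
    · have := Real.arctan_lt_pi_div_two r; rw [hγ_def]; linarith
    · have := Real.neg_pi_div_two_lt_arctan r
      have hpi := Real.pi_pos
      rw [hγ_def]; linarith
  refine ⟨fun j => -q.coeff j / Real.sin γ, γ, hγmem, ?_⟩
  have hextws : ∀ n, ext0 (fun j : Fin (d-1) => -q.coeff j / Real.sin γ) n
      = -q.coeff n / Real.sin γ := by
    intro n
    rw [ext0]
    by_cases h : n < d - 1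
    · simp [h]
    · rw [dif_neg h, hqzero n (by omega)]
      simp
  intro j hj
  rw [← hcoeff, hqc j, hextws, extm]
  by_cases h0 : j = 0
  · subst h0
    simp only [if_true]
    rw [hcr]
    field_simp
    ring
  · rw [if_neg h0, if_neg h0, hextws]
    rw [hcr]
    field_simp
    ring
end
end

section
/- Let m ≥ 5, Λ ⊆ {3,...,m-2} nonempty, and n ≥ 4 even. For every u ∈ ℝ^{m-1} with u(1) ≠ 0, u(m-1) ≠ 0, and u(Λ ∪ (Λ-1)) = 0, every y ∈ ℝ^n decomposable as y(l) = v(l-1) sin φ - v(l) cos φ with v(1) ≠ 0, v(n-1) ≠ 0, and every θ with sin θ cos θ ≠ 0 and sin(φ - θ) ≠ 0 and sin φ cos φ ≠ 0, the pair (x, y) with x(j) = u(j) cos θ - u(j-1) sin θ lies in K₀(Λ, m) × ℝ^n and is unidentifiable within K₀(Λ, m) × ℝ^n. -/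
open Finset

noncomputable section

/-- The canonical-sparse cone `K₀(Λ,d)` (0-indexed). -/
def K0 (Λ : Finset ℕ) (d : ℕ) : Set (Fin d → ℝ) :=
  {w | ext0 w 0 ≠ 0 ∧ ext0 w (d - 1) ≠ 0 ∧ ∀ j ∈ Λ, ext0 w j = 0}

/- ### Auxiliary machinery -/

/-- Shift a ℕ-indexed sequence by one. -/
def shf (f : ℕ → ℝ) : ℕ → ℝ := fun j => if j = 0 then 0 else f (j - 1)

/-- Convolution of ℕ-indexed sequences. -/
def Cnv (f g : ℕ → ℝ) : ℕ → ℝ := fun l => ∑ j ∈ Finset.range (l + 1), f j * g (l - j)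

lemma ext0_lt {d : ℕ} (w : Fin d → ℝ) {j : ℕ} (h : j < d) : ext0 w j = w ⟨j, h⟩ := dif_pos h

lemma ext0_ge {d : ℕ} (w : Fin d → ℝ) {j : ℕ} (h : d ≤ j) : ext0 w j = 0 :=
  dif_neg (not_lt.2 h)

lemma extm_eq_shf {d : ℕ} (u : Fin d → ℝ) : extm u = shf (ext0 u) := rfl

lemma Cnv_shf_left (f g : ℕ → ℝ) (l : ℕ) : Cnv (shf f) g l = shf (Cnv f g) l := by
  cases l with
  | zero => simp [Cnv, shf]
  | succ l =>
    have hR : shf (Cnv f g) (l + 1) = Cnv f g l := by simp [shf]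
    rw [hR]
    simp only [Cnv]
    rw [Finset.sum_range_succ']
    have h0 : shf f 0 = 0 := by simp [shf]
    rw [h0, zero_mul, add_zero]
    refine Finset.sum_congr rfl fun j hj => ?_
    have h1 : shf f (j + 1) = f j := by simp [shf]
    rw [h1]
    have h2 : l + 1 - (j + 1) = l - j := by omega
    rw [h2]

lemma Cnv_shf_right (f g : ℕ → ℝ) (l : ℕ) : Cnv f (shf g) l = shf (Cnv f g) l := by
  cases l with
  | zero => simp [Cnv, shf]
  | succ l =>
    have hR : shf (Cnv f g) (l + 1) = Cnv f g l := by simp [shf]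
    rw [hR]
    simp only [Cnv]
    rw [Finset.sum_range_succ]
    have h0 : shf g (l + 1 - (l + 1)) = 0 := by simp [shf]
    rw [h0, mul_zero, add_zero]
    refine Finset.sum_congr rfl fun j hj => ?_
    rw [Finset.mem_range] at hj
    have h1 : shf g (l + 1 - j) = g (l - j) := by
      rw [shf]
      rw [if_neg (by omega)]
      congr 1
      omega
    rw [h1]

lemma Cnv_affine (f g : ℕ → ℝ) (a b c d : ℝ) (l : ℕ) :
    Cnv (fun j => a * f j + b * shf f j) (fun k => c * g k + d * shf g k) l
      = (a * c) * Cnv f g l + (a * d + b * c) * shf (Cnv f g) l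
        + (b * d) * shf (shf (Cnv f g)) l := by
  have key : Cnv (fun j => a * f j + b * shf f j) (fun k => c * g k + d * shf g k) l
      = (a * c) * Cnv f g l + (a * d) * Cnv f (shf g) l + (b * c) * Cnv (shf f) g l
        + (b * d) * Cnv (shf f) (shf g) l := by
    simp only [Cnv, Finset.mul_sum, ← Finset.sum_add_distrib]
    exact Finset.sum_congr rfl fun j _ => by ring
  rw [key, Cnv_shf_right, Cnv_shf_left]
  have : Cnv (shf f) (shf g) l = shf (shf (Cnv f g)) l := by
    rw [Cnv_shf_right (shf f) g l]
    cases l with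
    | zero => simp [shf]
    | succ l => simp only [shf, Nat.succ_ne_zero, if_false, Nat.add_sub_cancel,
        Cnv_shf_left f g l]
  rw [this]; ring

lemma conv_as_double (f g : ℕ → ℝ) (l : ℕ) (s : Finset ℕ) (hs : Finset.range (l + 1) ⊆ s) :
    ∑ j ∈ s, ∑ k ∈ s, (if j + k = l then f j * g k else 0) = Cnv f g l := by
  have houter : ∑ j ∈ Finset.range (l + 1), (∑ k ∈ s, if j + k = l then f j * g k else 0)
      = ∑ j ∈ s, ∑ k ∈ s, (if j + k = l then f j * g k else 0) := by
    refine Finset.sum_subset hs fun j _ hj => ?_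
    rw [Finset.mem_range] at hj
    refine Finset.sum_eq_zero fun k _ => if_neg (by omega)
  rw [← houter]
  have hinner : ∀ j ∈ Finset.range (l + 1),
      (∑ k ∈ s, if j + k = l then f j * g k else 0) = f j * g (l - j) := by
    intro j hj
    rw [Finset.mem_range] at hj
    have h1 : (∑ k ∈ Finset.range (l + 1), if j + k = l then f j * g k else 0)
        = ∑ k ∈ s, if j + k = l then f j * g k else 0 := by
      refine Finset.sum_subset hs fun k _ hk => ?_
      rw [Finset.mem_range] at hk
      exact if_neg (by omega)
    rw [← h1]
    have h2 : ∀ k ∈ Finset.range (l + 1),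
        (if j + k = l then f j * g k else 0) = (if k = l - j then f j * g k else 0) := by
      intro k _
      by_cases h : j + k = l
      · rw [if_pos h, if_pos (by omega)]
      · rw [if_neg h, if_neg (by omega)]
    rw [Finset.sum_congr rfl h2, Finset.sum_ite_eq' (Finset.range (l + 1)) (l - j)
      (fun k => f j * g k), if_pos (Finset.mem_range.2 (by omega))]
  rw [Finset.sum_congr rfl hinner]
  rfl

lemma conv_eq_Cnv {m n : ℕ} (x : Fin m → ℝ) (y : Fin n → ℝ) (l : ℕ) :
    (∑ j : Fin m, ∑ k : Fin n, if (j : ℕ) + (k : ℕ) = l then x j * y k else 0)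
      = Cnv (ext0 x) (ext0 y) l := by
  set s := Finset.range (l + 1 + m + n) with hs
  have hsub : Finset.range (l + 1) ⊆ s := by
    intro t ht; rw [Finset.mem_range] at *; omega
  rw [← conv_as_double (ext0 x) (ext0 y) l s hsub]
  have step1 : (∑ j : Fin m, ∑ k : Fin n, if (j : ℕ) + (k : ℕ) = l then x j * y k else 0)
      = ∑ j ∈ Finset.range m, ∑ k ∈ Finset.range n,
          (if j + k = l then ext0 x j * ext0 y k else 0) := by
    rw [← Fin.sum_univ_eq_sum_range
      (fun j => ∑ k ∈ Finset.range n, (if j + k = l then ext0 x j * ext0 y k else 0)) m]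
    refine Finset.sum_congr rfl fun j _ => ?_
    rw [← Fin.sum_univ_eq_sum_range
      (fun k => if (j : ℕ) + k = l then ext0 x (j : ℕ) * ext0 y k else 0) n]
    refine Finset.sum_congr rfl fun k _ => ?_
    simp [ext0]
  rw [step1]
  have step2 : ∀ j ∈ Finset.range m,
      (∑ k ∈ Finset.range n, if j + k = l then ext0 x j * ext0 y k else 0)
        = ∑ k ∈ s, (if j + k = l then ext0 x j * ext0 y k else 0) := by
    intro j _
    refine Finset.sum_subset (by intro t ht; rw [Finset.mem_range] at *; omega)
      fun k _ hk => ?_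
    rw [Finset.mem_range] at hk
    have : ext0 y k = 0 := ext0_ge y (by omega)
    rw [this, mul_zero, ite_self]
  rw [Finset.sum_congr rfl step2]
  refine Finset.sum_subset (by intro t ht; rw [Finset.mem_range] at *; omega)
    fun j _ hj => ?_
  rw [Finset.mem_range] at hj
  refine Finset.sum_eq_zero fun k _ => ?_
  have : ext0 x j = 0 := ext0_ge x (by omega)
  rw [this, zero_mul, ite_self]

/-- mixed canonical-sparse/unconstrained unidentifiability
(indices 0-indexed: `Λ ⊆ {3,…,m-2}` (1-indexed) becomes `Λ ⊆ Icc 2 (m-3)`). -/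
theorem mixed_unidentifiable (m n : ℕ) (hm : 5 ≤ m) (hn : 4 ≤ n) (hneven : Even n)
    (Λ : Finset ℕ) (hΛne : Λ.Nonempty) (hΛ : Λ ⊆ Finset.Icc 2 (m - 3))
    (u : Fin (m - 1) → ℝ) (hu0 : ext0 u 0 ≠ 0) (hum : ext0 u (m - 2) ≠ 0)
    (huΛ : ∀ j ∈ Λ ∪ Λ.image (· - 1), ext0 u j = 0)
    (v : Fin (n - 1) → ℝ) (hv0 : ext0 v 0 ≠ 0) (hvn : ext0 v (n - 2) ≠ 0)
    (θ φ : ℝ)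
    (hθ : Real.sin θ * Real.cos θ ≠ 0) (hφ : Real.sin φ * Real.cos φ ≠ 0)
    (hθφ : Real.sin (φ - θ) ≠ 0)
    (x : Fin m → ℝ) (y : Fin n → ℝ)
    (hx : ∀ i : Fin m, x i = ext0 u i * Real.cos θ - extm u i * Real.sin θ)
    (hy : ∀ l : Fin n, y l = extm v l * Real.sin φ - ext0 v l * Real.cos φ) :
    x ∈ K0 Λ m ∧
    ∃ (x' : Fin m → ℝ) (y' : Fin n → ℝ), x' ∈ K0 Λ m ∧ conv x' y' = conv x y ∧
      ¬ ∃ α : ℝ, α ≠ 0 ∧ x' = α • x ∧ y' = α⁻¹ • y := by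
  obtain ⟨hsθ, hcθ⟩ := mul_ne_zero_iff.1 hθ
  obtain ⟨hsφ, hcφ⟩ := mul_ne_zero_iff.1 hφ
  -- generic membership lemma for vectors of the given shape
  have hmem : ∀ (w : Fin m → ℝ) (sθ cθ : ℝ), sθ ≠ 0 → cθ ≠ 0 →
      (∀ i : Fin m, w i = ext0 u i * cθ - extm u i * sθ) → w ∈ K0 Λ m := by
    intro w sθ cθ hsθ' hcθ' hw
    refine ⟨?_, ?_, ?_⟩
    · have h0 : (0 : ℕ) < m := by omega
      rw [ext0_lt w h0, hw]
      have : extm u ((⟨0, h0⟩ : Fin m) : ℕ) = 0 := by simp [extm]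
      rw [this]
      have : ext0 u ((⟨0, h0⟩ : Fin m) : ℕ) = ext0 u 0 := rfl
      rw [this, zero_mul, sub_zero]
      exact mul_ne_zero hu0 hcθ'
    · have h1 : m - 1 < m := by omega
      rw [ext0_lt w h1, hw]
      have hcoe : ((⟨m - 1, h1⟩ : Fin m) : ℕ) = m - 1 := rfl
      rw [hcoe]
      have e1 : ext0 u (m - 1) = 0 := ext0_ge u (by omega)
      have e2 : extm u (m - 1) = ext0 u (m - 2) := by
        rw [extm]
        rw [if_neg (by omega)]
        have h21 : m - 1 - 1 = m - 2 := by omega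
        rw [h21]
      rw [e1, e2, zero_mul, zero_sub]
      exact neg_ne_zero.2 (mul_ne_zero hum hsθ')
    · intro j hj
      have hj2 := Finset.mem_Icc.1 (hΛ hj)
      have hjm : j < m := by omega
      rw [ext0_lt w hjm, hw]
      have hcoe : ((⟨j, hjm⟩ : Fin m) : ℕ) = j := rfl
      rw [hcoe]
      have e1 : ext0 u j = 0 := huΛ j (Finset.mem_union_left _ hj)
      have e2 : extm u j = 0 := by
        rw [extm]
        rw [if_neg (by omega)]
        exact huΛ (j - 1) (Finset.mem_union_right _
          (Finset.mem_image.2 ⟨j, hj, rfl⟩))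
      rw [e1, e2, zero_mul, zero_mul, sub_zero]
  have hxK : x ∈ K0 Λ m := hmem x (Real.sin θ) (Real.cos θ) hsθ hcθ hx
  refine ⟨hxK, ?_⟩
  -- swapped pair
  set x' : Fin m → ℝ := fun i => ext0 u i * Real.cos φ - extm u i * Real.sin φ with hx'def
  set y' : Fin n → ℝ := fun l => extm v l * Real.sin θ - ext0 v l * Real.cos θ with hy'def
  refine ⟨x', y', hmem x' (Real.sin φ) (Real.cos φ) hsφ hcφ (fun i => rfl), ?_, ?_⟩
  · -- convolution equality
    funext l
    have key : ∀ (a b c d : ℝ) (w : Fin m → ℝ) (z : Fin n → ℝ),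
        (∀ i : ℕ, ext0 w i = a * ext0 u i + b * shf (ext0 u) i) →
        (∀ k : ℕ, ext0 z k = c * ext0 v k + d * shf (ext0 v) k) →
        Cnv (ext0 w) (ext0 z) (l : ℕ)
          = (a * c) * Cnv (ext0 u) (ext0 v) (l : ℕ)
            + (a * d + b * c) * shf (Cnv (ext0 u) (ext0 v)) (l : ℕ)
            + (b * d) * shf (shf (Cnv (ext0 u) (ext0 v))) (l : ℕ) := by
      intro a b c d w z hw hz
      have h1 : ext0 w = fun i => a * ext0 u i + b * shf (ext0 u) i := funext hw
      have h2 : ext0 z = fun k => c * ext0 v k + d * shf (ext0 v) k := funext hz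
      rw [h1, h2, Cnv_affine]
    have hxw : ∀ i : ℕ, ext0 x i = Real.cos θ * ext0 u i + (-Real.sin θ) * shf (ext0 u) i := by
      intro i
      by_cases h : i < m
      · rw [ext0_lt x h, hx ⟨i, h⟩, extm_eq_shf]
        ring
      · rw [ext0_ge x (le_of_not_gt h)]
        have e1 : ext0 u i = 0 := ext0_ge u (by omega)
        have e2 : shf (ext0 u) i = 0 := by
          rw [shf, if_neg (by omega)]
          exact ext0_ge u (by omega)
        rw [e1, e2]; ring
    have hx'w : ∀ i : ℕ, ext0 x' i = Real.cos φ * ext0 u i + (-Real.sin φ) * shf (ext0 u) i := by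
      intro i
      by_cases h : i < m
      · rw [ext0_lt x' h]
        show ext0 u ((⟨i, h⟩ : Fin m) : ℕ) * Real.cos φ
            - extm u ((⟨i, h⟩ : Fin m) : ℕ) * Real.sin φ = _
        rw [extm_eq_shf]
        ring
      · rw [ext0_ge x' (le_of_not_gt h)]
        have e1 : ext0 u i = 0 := ext0_ge u (by omega)
        have e2 : shf (ext0 u) i = 0 := by
          rw [shf, if_neg (by omega)]
          exact ext0_ge u (by omega)
        rw [e1, e2]; ring
    have hyw : ∀ k : ℕ, ext0 y k = (-Real.cos φ) * ext0 v k + Real.sin φ * shf (ext0 v) k := by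
      intro k
      by_cases h : k < n
      · rw [ext0_lt y h, hy ⟨k, h⟩, extm_eq_shf]
        ring
      · rw [ext0_ge y (le_of_not_gt h)]
        have e1 : ext0 v k = 0 := ext0_ge v (by omega)
        have e2 : shf (ext0 v) k = 0 := by
          rw [shf, if_neg (by omega)]
          exact ext0_ge v (by omega)
        rw [e1, e2]; ring
    have hy'w : ∀ k : ℕ, ext0 y' k = (-Real.cos θ) * ext0 v k + Real.sin θ * shf (ext0 v) k := by
      intro k
      by_cases h : k < n
      · rw [ext0_lt y' h]
        show extm v ((⟨k, h⟩ : Fin n) : ℕ) * Real.sin θ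
            - ext0 v ((⟨k, h⟩ : Fin n) : ℕ) * Real.cos θ = _
        rw [extm_eq_shf]
        ring
      · rw [ext0_ge y' (le_of_not_gt h)]
        have e1 : ext0 v k = 0 := ext0_ge v (by omega)
        have e2 : shf (ext0 v) k = 0 := by
          rw [shf, if_neg (by omega)]
          exact ext0_ge v (by omega)
        rw [e1, e2]; ring
    have lhs : conv x' y' l = Cnv (ext0 x') (ext0 y') (l : ℕ) := conv_eq_Cnv x' y' (l : ℕ)
    have rhs : conv x y l = Cnv (ext0 x) (ext0 y) (l : ℕ) := conv_eq_Cnv x y (l : ℕ)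
    rw [lhs, rhs,
      key (Real.cos φ) (-Real.sin φ) (-Real.cos θ) (Real.sin θ) x' y' hx'w hy'w,
      key (Real.cos θ) (-Real.sin θ) (-Real.cos φ) (Real.sin φ) x y hxw hyw]
    ring
  · -- not a scalar multiple
    rintro ⟨α, hα, hxx, -⟩
    have h0 : (0 : ℕ) < m := by omega
    have h1 : m - 1 < m := by omega
    have e0 := congrFun hxx ⟨0, h0⟩
    have e1 := congrFun hxx ⟨m - 1, h1⟩
    have hx0 : x ⟨0, h0⟩ = ext0 u 0 * Real.cos θ := by
      rw [hx ⟨0, h0⟩]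
      have : extm u ((⟨0, h0⟩ : Fin m) : ℕ) = 0 := by simp [extm]
      rw [this, zero_mul, sub_zero]
    have hx'0 : x' ⟨0, h0⟩ = ext0 u 0 * Real.cos φ := by
      show ext0 u ((⟨0, h0⟩ : Fin m) : ℕ) * Real.cos φ
          - extm u ((⟨0, h0⟩ : Fin m) : ℕ) * Real.sin φ = _
      have : extm u ((⟨0, h0⟩ : Fin m) : ℕ) = 0 := by simp [extm]
      rw [this, zero_mul, sub_zero]
    have hxm : x ⟨m - 1, h1⟩ = -(ext0 u (m - 2) * Real.sin θ) := by
      rw [hx ⟨m - 1, h1⟩]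
      have hcoe : ((⟨m - 1, h1⟩ : Fin m) : ℕ) = m - 1 := rfl
      rw [hcoe]
      have ea : ext0 u (m - 1) = 0 := ext0_ge u (by omega)
      have eb : extm u (m - 1) = ext0 u (m - 2) := by
        rw [extm]; rw [if_neg (by omega)]; rw [show m - 1 - 1 = m - 2 from by omega]
      rw [ea, eb, zero_mul, zero_sub]
    have hx'm : x' ⟨m - 1, h1⟩ = -(ext0 u (m - 2) * Real.sin φ) := by
      show ext0 u ((⟨m - 1, h1⟩ : Fin m) : ℕ) * Real.cos φ
          - extm u ((⟨m - 1, h1⟩ : Fin m) : ℕ) * Real.sin φ = _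
      have hcoe : ((⟨m - 1, h1⟩ : Fin m) : ℕ) = m - 1 := rfl
      rw [hcoe]
      have ea : ext0 u (m - 1) = 0 := ext0_ge u (by omega)
      have eb : extm u (m - 1) = ext0 u (m - 2) := by
        rw [extm]; rw [if_neg (by omega)]; rw [show m - 1 - 1 = m - 2 from by omega]
      rw [ea, eb, zero_mul, zero_sub]
    rw [hx'0, Pi.smul_apply, smul_eq_mul, hx0] at e0
    rw [hx'm, Pi.smul_apply, smul_eq_mul, hxm] at e1
    have hc : Real.cos φ = α * Real.cos θ := by
      have : ext0 u 0 * Real.cos φ = ext0 u 0 * (α * Real.cos θ) := by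
        rw [e0]; ring
      exact mul_left_cancel₀ hu0 this
    have hs : Real.sin φ = α * Real.sin θ := by
      have : ext0 u (m - 2) * Real.sin φ = ext0 u (m - 2) * (α * Real.sin θ) := by
        have := e1
        nlinarith [e1]
      exact mul_left_cancel₀ hum this
    apply hθφ
    rw [Real.sin_sub, hc, hs]
    ring
end
end
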